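/- arXiv:math/0503553 — 2 statements merged into one kernel-verified Lean document; each statement's English description precedes it below -/
import Mathlib

section
/- Let k ≥ 3, let ℓ = ⌈k/2⌉ - 1, and let s = 2ℓ^k + 1. Then in every partition of the edge set of the complete split graph K*_{k,s} into ℓ parts, some part contains a subgraph isomorphic to K_{3,3}. Consequently the thickness of K*_{k,s} is at least ⌈k/2⌉. -/
/-!
Colour each vertex `w` of the independent side by its colour vector `u ↦ c(uw)` on the clique.
With `ℓ` colours there are `ℓ ^ k` colour vectors, so among `2ℓ ^ k + 1` vertices three share
one; since `k > 2ℓ`, that vector takes some colour on three clique vertices. These three clique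
vertices and the three independent ones span a monochromatic `K_{3,3}`.
-/

/-- The complete split graph `K*_{k,s}`: a `k`-clique plus `s` independent vertices
each adjacent to every vertex of the clique. -/
def completeSplitGraph (k s : ℕ) : SimpleGraph (Fin k ⊕ Fin s) :=
  SimpleGraph.fromRel (fun a _ => a.isLeft = true)

open Fintype

theorem Fintype.exists_embedding_fin_fiber_of_mul_lt_card {α β : Type*} [Fintype α] [Fintype β]
    [DecidableEq β] (f : α → β) {n : ℕ} (h : card β * n < card α) :
    ∃ y, ∃ g : Fin (n + 1) ↪ α, ∀ j, f (g j) = y := by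
  obtain ⟨y, hy⟩ := exists_lt_card_fiber_of_mul_lt_card f h
  have hcard : card (Fin (n + 1)) ≤ card {x // f x = y} := by
    simpa [card_subtype] using hy
  obtain ⟨g⟩ := Function.Embedding.nonempty_of_card_le hcard
  exact ⟨y, g.trans (Function.Embedding.subtype _), fun j => (g j).2⟩

theorem completeSplitGraph_adj_inl_inr {k s : ℕ} (u : Fin k) (w : Fin s) :
    (completeSplitGraph k s).Adj (.inl u) (.inr w) := by
  simp [completeSplitGraph]

theorem completeSplitGraph_exists_monochromatic_completeBipartite {k s m n : ℕ} {γ : Type*}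
    [Fintype γ] [DecidableEq γ] (c : Sym2 (Fin k ⊕ Fin s) → γ)
    (hk : card γ * m < k) (hs : card γ ^ k * n < s) :
    ∃ (i : γ) (g : Fin (m + 1) ⊕ Fin (n + 1) ↪ Fin k ⊕ Fin s),
      ∀ u v, (completeBipartiteGraph (Fin (m + 1)) (Fin (n + 1))).Adj u v →
        (completeSplitGraph k s).Adj (g u) (g v) ∧ c s(g u, g v) = i := by
  obtain ⟨y, W, hW⟩ := exists_embedding_fin_fiber_of_mul_lt_card
    (fun w u => c s(.inl u, .inr w)) (n := n) (by simpa using hs)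
  obtain ⟨i, U, hU⟩ := exists_embedding_fin_fiber_of_mul_lt_card y (n := m) (by simpa using hk)
  have hmono : ∀ a b, c s(.inl (U a), .inr (W b)) = i := fun a b =>
    (congrFun (hW b) (U a)).trans (hU a)
  refine ⟨i, U.sumMap W, ?_⟩
  rintro (a | a) (b | b) hadj
  · simp at hadj
  · exact ⟨completeSplitGraph_adj_inl_inr _ _, hmono a b⟩
  · exact ⟨(completeSplitGraph_adj_inl_inr _ _).symm, by rw [Sym2.eq_swap]; exact hmono b a⟩
  · simp at hadj

/-- For `k ≥ 3`, `ℓ = ⌈k/2⌉ - 1`, `s = 2ℓ^k+1`: every partition of the edges of the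
complete split graph `K*_{k,s}` into `ℓ` parts has a part containing a copy of `K_{3,3}`. -/
theorem completeSplitGraph_thickness (k : ℕ) (hk : 3 ≤ k)
    (c : Sym2 (Fin k ⊕ Fin (2 * ((k + 1) / 2 - 1) ^ k + 1)) → Fin ((k + 1) / 2 - 1)) :
    ∃ (i : Fin ((k + 1) / 2 - 1))
      (g : (Fin 3 ⊕ Fin 3) ↪ (Fin k ⊕ Fin (2 * ((k + 1) / 2 - 1) ^ k + 1))),
      ∀ u v, (completeBipartiteGraph (Fin 3) (Fin 3)).Adj u v →
        (completeSplitGraph k (2 * ((k + 1) / 2 - 1) ^ k + 1)).Adj (g u) (g v) ∧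
        c s(g u, g v) = i :=
  completeSplitGraph_exists_monochromatic_completeBipartite (m := 2) (n := 2) c
    (by rw [card_fin]; omega) (by rw [card_fin]; omega)
end

section
/- Every k-tree admits an acyclic vertex colouring with k+1 colours; that is, a proper (k+1)-colouring in which the union of any two colour classes induces a forest. -/
/-!
Order the vertices as they are added in the construction of the `k`-tree. The neighbours of a
vertex that come before it form a clique of at most `k` vertices, so colouring greedily along the
order uses at most `k + 1` colours and gives these earlier neighbours pairwise distinct colours,
all different from the vertex's own. Hence inside the union of two colour classes every vertex has
at most one earlier neighbour, and such a graph is a forest: the latest vertex of a cycle would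
have two.
-/

/-- A `k`-tree, defined via a construction ordering: the first `k+1` vertices form a
clique, and each later vertex's neighbourhood among earlier vertices is a `k`-clique. -/
def IsKTree {V : Type*} [Finite V] (k : ℕ) (G : SimpleGraph V) : Prop :=
  k + 1 ≤ Nat.card V ∧
  ∃ σ : Fin (Nat.card V) ≃ V,
    ∀ i : Fin (Nat.card V),
      (((i : ℕ) ≤ k) →
        {u | G.Adj (σ i) u ∧ ((σ.symm u : Fin (Nat.card V)) : ℕ) < (i : ℕ)} =
          {u | ((σ.symm u : Fin (Nat.card V)) : ℕ) < (i : ℕ)}) ∧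
      (k < (i : ℕ) →
        ({u | G.Adj (σ i) u ∧ ((σ.symm u : Fin (Nat.card V)) : ℕ) < (i : ℕ)}.ncard = k ∧
          G.IsClique {u | G.Adj (σ i) u ∧ ((σ.symm u : Fin (Nat.card V)) : ℕ) < (i : ℕ)}))

theorem Set.exists_forall_ne_of_ncard_le {α : Type*} {k : ℕ} {S : Set α} (hS : S.Finite)
    (hk : S.ncard ≤ k) (g : α → Fin (k + 1)) : ∃ a, ∀ u ∈ S, g u ≠ a := by
  have hlt : (g '' S).ncard < Nat.card (Fin (k + 1)) := by
    rw [Nat.card_eq_fintype_card, Fintype.card_fin]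
    exact (Set.ncard_image_le hS).trans_lt (Nat.lt_succ_of_le hk)
  obtain ⟨a, ha⟩ := (Set.ne_univ_iff_exists_notMem (g '' S)).1 fun h => by
    rw [h, Set.ncard_univ] at hlt
    exact hlt.false
  exact ⟨a, fun u hu hua => ha ⟨u, hu, hua⟩⟩

namespace SimpleGraph

variable {V : Type*} {G : SimpleGraph V} {f : V → ℕ}

def lowerNeighborSet (G : SimpleGraph V) (f : V → ℕ) (v : V) : Set V :=
  {u | G.Adj v u ∧ f u < f v}

theorem isAcyclic_of_lowerNeighborSet_subsingleton (hf : Function.Injective f)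
    (h : ∀ v, (G.lowerNeighborSet f v).Subsingleton) : G.IsAcyclic := by
  classical
  intro v c hc
  obtain ⟨w, hw, hmax⟩ := c.support.toFinset.exists_max_image f ⟨v, by simp⟩
  rw [List.mem_toFinset] at hw
  set d := c.rotate w hw
  have hd : d.IsCycle := hc.rotate hw
  have hlower : ∀ u ∈ d.support, G.Adj w u → u ∈ G.lowerNeighborSet f w := fun u hu hadj =>
    ⟨hadj, (hmax u (by simpa [d] using hu)).lt_of_ne fun hwu => hadj.ne (hf hwu).symm⟩
  exact hd.snd_ne_penultimate <| h w
    (hlower _ (d.getVert_mem_support 1) (d.adj_snd hd.not_nil))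
    (hlower _ (d.getVert_mem_support _) (d.adj_penultimate hd.not_nil).symm)

open Classical in
/-- The fallback colour `0` is never taken when `v` has at most `k` lower neighbours. -/
noncomputable def greedyColor (G : SimpleGraph V) (f : V → ℕ) (k : ℕ) (v : V) : Fin (k + 1) :=
  if h : ∃ a, ∀ u ∈ G.lowerNeighborSet f v, greedyColor G f k u ≠ a then h.choose else 0
termination_by f v
decreasing_by
  all_goals exact (show G.Adj v u ∧ f u < f v from ‹_›).2

theorem greedyColor_ne_of_mem_lowerNeighborSet {k : ℕ} {u v : V}
    (hk : (G.lowerNeighborSet f v).ncard ≤ k) (hv : (G.lowerNeighborSet f v).Finite)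
    (hu : u ∈ G.lowerNeighborSet f v) : G.greedyColor f k u ≠ G.greedyColor f k v := by
  have hfree := Set.exists_forall_ne_of_ncard_le hv hk (G.greedyColor f k)
  rw [greedyColor.eq_1 G f k v, dif_pos hfree]
  exact hfree.choose_spec u hu

noncomputable def greedyColoring [Finite V] {k : ℕ} (hf : Function.Injective f)
    (hk : ∀ v, (G.lowerNeighborSet f v).ncard ≤ k) : G.Coloring (Fin (k + 1)) :=
  Coloring.mk (G.greedyColor f k) fun {u v} huv => by
    rcases (hf.ne huv.ne).lt_or_gt with hlt | hlt
    · exact greedyColor_ne_of_mem_lowerNeighborSet (hk v) (Set.toFinite _) ⟨huv.symm, hlt⟩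
    · exact (greedyColor_ne_of_mem_lowerNeighborSet (hk u) (Set.toFinite _) ⟨huv, hlt⟩).symm

theorem Coloring.isAcyclic_induce_two_colors {α : Type*} (C : G.Coloring α)
    (hf : Function.Injective f) (hclique : ∀ v, G.IsClique (G.lowerNeighborSet f v)) (i j : α) :
    (G.induce {v | C v = i ∨ C v = j}).IsAcyclic := by
  refine isAcyclic_of_lowerNeighborSet_subsingleton (f := f ∘ Subtype.val)
    (hf.comp Subtype.val_injective) fun w u₁ hu₁ u₂ hu₂ => ?_
  by_contra hne
  have hadj : G.Adj u₁ u₂ := hclique w ⟨hu₁.1, hu₁.2⟩ ⟨hu₂.1, hu₂.2⟩ (Subtype.val_injective.ne hne)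
  have hw₁ := C.valid hu₁.1
  have hw₂ := C.valid hu₂.1
  apply C.valid hadj
  rcases w.2 with h | h <;> rcases u₁.2 with h₁ | h₁ <;> rcases u₂.2 with h₂ | h₂ <;> simp_all

end SimpleGraph

open SimpleGraph in
theorem IsKTree.exists_lowerNeighborSet_ncard_le_isClique {V : Type*} [Finite V] {k : ℕ}
    {G : SimpleGraph V} (h : IsKTree k G) :
    ∃ f : V → ℕ, Function.Injective f ∧
      (∀ v, (G.lowerNeighborSet f v).ncard ≤ k) ∧ ∀ v, G.IsClique (G.lowerNeighborSet f v) := by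
  obtain ⟨-, σ, hσ⟩ := h
  set f : V → ℕ := fun v => σ.symm v
  have hf : Function.Injective f := Fin.val_injective.comp σ.symm.injective
  have hlower : ∀ i, G.lowerNeighborSet f (σ i) = {u | G.Adj (σ i) u ∧ f u < i} := fun i => by
    simp [lowerNeighborSet, f]
  have hinitial : ∀ u₁ u₂, f u₁ < f u₂ → f u₂ ≤ k → G.Adj u₁ u₂ := fun u₁ u₂ h₁₂ h₂ => by
    have hmem : u₁ ∈ {u | f u < f u₂} := h₁₂
    rw [← (hσ (σ.symm u₂)).1 h₂, σ.apply_symm_apply] at hmem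
    exact hmem.1.symm
  refine ⟨f, hf, forall_and.1 (σ.forall_congr_right.1 fun i => ?_)⟩
  rw [hlower]
  rcases le_or_gt (i : ℕ) k with hik | hki
  · rw [(hσ i).1 hik]
    refine ⟨?_, fun u₁ hu₁ u₂ hu₂ hne => ?_⟩
    · calc {u | f u < i}.ncard ≤ (Set.Iio (i : ℕ)).ncard :=
            Set.ncard_le_ncard_of_injOn f (fun u hu => hu) hf.injOn
        _ ≤ k := by rwa [Set.ncard_Iio_nat]
    · rcases (hf.ne hne).lt_or_gt with h₁₂ | h₂₁
      · exact hinitial u₁ u₂ h₁₂ (hu₂.out.le.trans hik)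
      · exact (hinitial u₂ u₁ h₂₁ (hu₁.out.le.trans hik)).symm
  · exact ⟨((hσ i).2 hki).1.le, ((hσ i).2 hki).2⟩

theorem ktree_acyclic_coloring_general {V : Type*} [Finite V] (k : ℕ)
    (G : SimpleGraph V) (h : IsKTree k G) :
    ∃ c : V → Fin (k + 1),
      (∀ u v, G.Adj u v → c u ≠ c v) ∧
      ∀ i j : Fin (k + 1), (G.induce {v | c v = i ∨ c v = j}).IsAcyclic := by
  obtain ⟨f, hf, hcard, hclique⟩ := h.exists_lowerNeighborSet_ncard_le_isClique
  let C := SimpleGraph.greedyColoring hf hcard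
  exact ⟨C, fun _ _ huv => C.valid huv, C.isAcyclic_induce_two_colors hf hclique⟩

/-- Every `k`-tree admits an acyclic `(k+1)`-colouring: a proper vertex colouring in
which the union of any two colour classes induces a forest. -/
theorem ktree_acyclic_coloring {V : Type*} [Finite V] (k : ℕ) (hk : 1 ≤ k)
    (G : SimpleGraph V) (h : IsKTree k G) :
    ∃ c : V → Fin (k + 1),
      (∀ u v, G.Adj u v → c u ≠ c v) ∧
      ∀ i j : Fin (k + 1), (G.induce {v | c v = i ∨ c v = j}).IsAcyclic :=
  ktree_acyclic_coloring_general k G h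
end
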